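/- arXiv:2310.17820 — 2 statements merged into one kernel-verified Lean document; each statement's English description precedes it below -/
import Mathlib

section
/- Let B ∈ ℝ^{J×K} have full column rank K and an ordered generalized lower triangular (GLT) structure: there exist pivot rows l₁ < l₂ < ⋯ < l_K such that for each column k, B_{i,k} = 0 for all i < l_k and B_{l_k,k} > 0. If A ∈ ℝ^{J×K} also has an ordered GLT structure and A A' = B B', then A = B. -/
open scoped Matrix
/-- `B` has an ordered generalized lower triangular (GLT) structure: pivot rows are strictly
increasing across columns, each column vanishes above its pivot, and pivots are positive. -/
def OrderedGLT {J K : ℕ} (B : Matrix (Fin J) (Fin K) ℝ) : Prop :=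
  ∃ l : Fin K → Fin J, StrictMono l ∧ (∀ k, 0 < B (l k) k) ∧
    ∀ k, ∀ i, i < l k → B i k = 0

theorem glt_aux (J : ℕ) : ∀ K : ℕ, ∀ A B : Matrix (Fin J) (Fin K) ℝ,
    OrderedGLT B → OrderedGLT A → A * Aᵀ = B * Bᵀ → A = B := by
  intro K
  induction K with
  | zero =>
    intro A B _ _ _
    ext i k
    exact k.elim0
  | succ K ih =>
    intro A B hB hA hgram
    obtain ⟨l, hlmono, hlpos, hlzero⟩ := hB
    obtain ⟨m, hmmono, hmpos, hmzero⟩ := hA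
    have gram : ∀ i j, ∑ k, A i k * A j k = ∑ k, B i k * B j k := by
      intro i j
      have := congrFun (congrFun hgram i) j
      simpa [Matrix.mul_apply, Matrix.transpose_apply] using this
    have hBrow : ∀ i, i < l 0 → ∀ k, B i k = 0 := fun i hi k =>
      hlzero k i (lt_of_lt_of_le hi (hlmono.monotone (Fin.zero_le k)))
    have hArow : ∀ i, i < m 0 → ∀ k, A i k = 0 := fun i hi k =>
      hmzero k i (lt_of_lt_of_le hi (hmmono.monotone (Fin.zero_le k)))
    have hArow' : ∀ i, i < l 0 → ∀ k, A i k = 0 := by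
      intro i hi k
      have h0 : ∑ k, A i k * A i k = 0 := by
        rw [gram i i]
        exact Finset.sum_eq_zero fun k _ => by rw [hBrow i hi k]; ring
      exact mul_self_eq_zero.mp
        ((Finset.sum_eq_zero_iff_of_nonneg (fun k _ => mul_self_nonneg (A i k))).mp
          h0 k (Finset.mem_univ k))
    have hBrow' : ∀ i, i < m 0 → ∀ k, B i k = 0 := by
      intro i hi k
      have h0 : ∑ k, B i k * B i k = 0 := by
        rw [← gram i i]
        exact Finset.sum_eq_zero fun k _ => by rw [hArow i hi k]; ring
      exact mul_self_eq_zero.mp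
        ((Finset.sum_eq_zero_iff_of_nonneg (fun k _ => mul_self_nonneg (B i k))).mp
          h0 k (Finset.mem_univ k))
    have hml : m 0 = l 0 := by
      rcases lt_trichotomy (m 0) (l 0) with h | h | h
      · exact absurd (hArow' (m 0) h 0) (ne_of_gt (hmpos 0))
      · exact h
      · exact absurd (hBrow' (l 0) h 0) (ne_of_gt (hlpos 0))
    set p := l 0 with hp
    have hApk : ∀ k : Fin (K + 1), k ≠ 0 → A p k = 0 := by
      intro k hk
      refine hmzero k p ?_
      rw [← hml]
      exact hmmono (Fin.pos_of_ne_zero hk)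
    have hBpk : ∀ k : Fin (K + 1), k ≠ 0 → B p k = 0 := by
      intro k hk
      exact hlzero k p (hlmono (Fin.pos_of_ne_zero hk))
    have hApm : 0 < A p 0 := by rw [← hml]; exact hmpos 0
    have hBpm : 0 < B p 0 := hlpos 0
    have hrowsumA : ∀ j, ∑ k, A p k * A j k = A p 0 * A j 0 := by
      intro j
      rw [Fin.sum_univ_succ]
      have : ∀ k : Fin K, A p k.succ * A j k.succ = 0 := by
        intro k
        rw [hApk k.succ (Fin.succ_ne_zero k), zero_mul]
      simp [this]
    have hrowsumB : ∀ j, ∑ k, B p k * B j k = B p 0 * B j 0 := by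
      intro j
      rw [Fin.sum_univ_succ]
      have : ∀ k : Fin K, B p k.succ * B j k.succ = 0 := by
        intro k
        rw [hBpk k.succ (Fin.succ_ne_zero k), zero_mul]
      simp [this]
    have hpp : A p 0 = B p 0 := by
      have h := gram p p
      rw [hrowsumA p, hrowsumB p] at h
      rcases mul_self_eq_mul_self_iff.mp h with h' | h'
      · exact h'
      · exfalso; nlinarith
    have hcol0 : ∀ j, A j 0 = B j 0 := by
      intro j
      have h := gram p j
      rw [hrowsumA j, hrowsumB j, hpp] at h
      exact mul_left_cancel₀ (ne_of_gt hBpm) h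
    -- submatrices dropping column 0
    have gram1 : ∀ i j, ∑ k : Fin K, A i k.succ * A j k.succ
        = ∑ k : Fin K, B i k.succ * B j k.succ := by
      intro i j
      have h := gram i j
      rw [Fin.sum_univ_succ, Fin.sum_univ_succ, hcol0 i, hcol0 j] at h
      linarith
    have hsub : A.submatrix id Fin.succ = B.submatrix id Fin.succ := by
      refine ih (A.submatrix id Fin.succ) (B.submatrix id Fin.succ)
        ⟨fun k => l k.succ, fun a b hab => hlmono (Fin.succ_lt_succ_iff.mpr hab),
          fun k => hlpos k.succ, fun k i hi => hlzero k.succ i hi⟩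
        ⟨fun k => m k.succ, fun a b hab => hmmono (Fin.succ_lt_succ_iff.mpr hab),
          fun k => hmpos k.succ, fun k i hi => hmzero k.succ i hi⟩ ?_
      ext i j
      simp only [Matrix.mul_apply, Matrix.transpose_apply, Matrix.submatrix_apply, id]
      exact gram1 i j
    ext i k
    induction k using Fin.cases with
    | zero => exact hcol0 i
    | succ k =>
      have := congrFun (congrFun hsub i) k
      simpa using this

/-- If `B` has full column rank and an ordered GLT structure, `A` has an ordered GLT
structure, and A A' = B B', then A = B. -/
theorem glt_identified (J K : ℕ) (A B : Matrix (Fin J) (Fin K) ℝ)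
    (hrank : B.rank = K) (hB : OrderedGLT B) (hA : OrderedGLT A)
    (hgram : A * Aᵀ = B * Bᵀ) : A = B :=
  glt_aux J K A B hB hA hgram
end

section
/- Let θ ~ N(ξ, Ω) be a K-dimensional Gaussian prior, and let the likelihood of observing binary data y ∈ {0,1}^J be ∏_{j=1}^J Φ((2y_j−1)(B_j'θ + d_j)). Then the posterior density of θ is proportional to φ_K(θ − ξ; Ω) · Φ_J(S^{-1}(D₁ξ + D₂) + S^{-1}D₁(θ − ξ); S^{-1}S^{-1}), where D₁ = diag(2y−1)B, D₂ = diag(2y−1)d, and S = diag((D₁ⱼ'ΩD₁ⱼ + 1)^{1/2})_{j=1..J}. -/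
open MeasureTheory
open scoped Matrix BigOperators

/-- Standard normal probability density function. -/
noncomputable def stdGaussPDF (t : ℝ) : ℝ := (Real.sqrt (2 * Real.pi))⁻¹ * Real.exp (-t ^ 2 / 2)

/-- Standard normal cumulative distribution function. -/
noncomputable def Phi (x : ℝ) : ℝ := ∫ t in Set.Iic x, stdGaussPDF t

/-- Density φ_K(x; Ω) of the centered K-variate Gaussian with covariance Ω. -/
noncomputable def mvGaussDensity {K : ℕ} (Ω : Matrix (Fin K) (Fin K) ℝ) (x : Fin K → ℝ) : ℝ :=
  (2 * Real.pi) ^ (-(K : ℝ) / 2) * Ω.det ^ (-(1 : ℝ) / 2) *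
    Real.exp (-(x ⬝ᵥ (Ω⁻¹ *ᵥ x)) / 2)

/-- The positive semidefinite square root `Matrix.PosSemidef.sqrt` of the older Mathlib. -/
noncomputable def posSemidefSqrt {n : Type*} [Fintype n] [DecidableEq n]
    {A : Matrix n n ℝ} (hA : A.PosSemidef) : Matrix n n ℝ :=
  hA.1.eigenvectorUnitary.1 * Matrix.diagonal ((↑) ∘ (Real.sqrt ∘ hA.1.eigenvalues)) *
    (star hA.1.eigenvectorUnitary : Matrix n n ℝ)

/-- CDF Φ_J(v; Σ) of the centered J-variate Gaussian with covariance Σ, defined via the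
image of a standard Gaussian product under the positive semidefinite square root of Σ. -/
noncomputable def gaussCDF {J : ℕ} (Sig : Matrix (Fin J) (Fin J) ℝ) (hSig : Sig.PosSemidef)
    (v : Fin J → ℝ) : ℝ :=
  (((MeasureTheory.Measure.pi fun _ : Fin J => ProbabilityTheory.gaussianReal 0 1).map
      fun z => posSemidefSqrt hSig *ᵥ z) {z | ∀ j, z j ≤ v j}).toReal

/-! The proportionality holds with `c = 1`. Because `S⁻¹` is a positive diagonal matrix, the
square root of `S⁻¹S⁻¹` is `S⁻¹` itself, so `Φ_J(S⁻¹w; S⁻¹S⁻¹)` is the probability that a standard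
Gaussian vector `z` satisfies `S⁻¹z ≤ S⁻¹w` coordinatewise, i.e. `z ≤ w`, which is `∏ⱼ Φ(wⱼ)`.
Here `w = D₁ξ + D₂ + D₁(θ − ξ) = D₁θ + D₂` has coordinates `(2yⱼ − 1)(Bⱼ'θ + dⱼ)`. -/

lemma Phi_eq_gaussianReal_Iic (a : ℝ) :
    Phi a = (ProbabilityTheory.gaussianReal 0 1 (Set.Iic a)).toReal := by
  rw [ProbabilityTheory.gaussianReal_apply_eq_integral 0 one_ne_zero,
    ENNReal.toReal_ofReal (setIntegral_nonneg measurableSet_Iic fun x _ =>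
      ProbabilityTheory.gaussianPDFReal_nonneg 0 1 x)]
  refine setIntegral_congr_fun measurableSet_Iic fun x _ => ?_
  simp [ProbabilityTheory.gaussianPDFReal, stdGaussPDF]

lemma posSemidefSqrt_eq_cfc {n : Type*} [Fintype n] [DecidableEq n]
    {A : Matrix n n ℝ} (hA : A.PosSemidef) : posSemidefSqrt hA = cfc Real.sqrt A := by
  rw [Matrix.IsHermitian.cfc_eq hA.1, Matrix.IsHermitian.cfc, Unitary.conjStarAlgAut_apply]
  rfl

lemma posSemidefSqrt_diagonal_mul_self {n : Type*} [Fintype n] [DecidableEq n]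
    {r : n → ℝ} (hr : 0 ≤ r) (hA : (Matrix.diagonal r * Matrix.diagonal r).PosSemidef) :
    posSemidefSqrt hA = Matrix.diagonal r := by
  have hself : IsSelfAdjoint (Matrix.diagonal r) := Matrix.isHermitian_diagonal r
  rw [posSemidefSqrt_eq_cfc, ← pow_two, ← cfc_comp_pow Real.sqrt 2 _ (by fun_prop) hself]
  conv_rhs => rw [← cfc_id' ℝ (Matrix.diagonal r) hself]
  refine cfc_congr fun x hx => ?_
  rw [spectrum_diagonal] at hx
  obtain ⟨j, rfl⟩ := hx
  exact Real.sqrt_sq (hr j)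

lemma gaussCDF_diagonal_mulVec {J : ℕ} {r : Fin J → ℝ} (hr : ∀ j, 0 < r j)
    {R : Matrix (Fin J) (Fin J) ℝ} (hR : R = Matrix.diagonal r) (hA : (R * R).PosSemidef)
    (w : Fin J → ℝ) : gaussCDF (R * R) hA (R *ᵥ w) = ∏ j, Phi (w j) := by
  subst hR
  have hscale : (fun z : Fin J → ℝ => Matrix.diagonal r *ᵥ z) = fun z j => r j * z j :=
    funext fun z => funext fun j => Matrix.mulVec_diagonal r z j
  have hmeas : Measurable fun z : Fin J → ℝ => Matrix.diagonal r *ᵥ z := by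
    rw [hscale]
    exact measurable_pi_lambda _ fun j => (measurable_pi_apply j).const_mul _
  have hbox (v : Fin J → ℝ) : {z : Fin J → ℝ | ∀ j, z j ≤ v j} = Set.Iic v := rfl
  have hpre : (fun z : Fin J → ℝ => Matrix.diagonal r *ᵥ z) ⁻¹' Set.Iic (Matrix.diagonal r *ᵥ w) =
      Set.univ.pi fun j => Set.Iic (w j) := by
    rw [hscale, Set.pi_univ_Iic]
    ext z
    simp only [Set.mem_preimage, Set.mem_Iic, Pi.le_def, Matrix.mulVec_diagonal,
      mul_le_mul_iff_of_pos_left (hr _)]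
  rw [gaussCDF, posSemidefSqrt_diagonal_mul_self (fun j => (hr j).le) hA, hbox,
    Measure.map_apply hmeas measurableSet_Iic, hpre, Measure.pi_pi, ENNReal.toReal_prod]
  simp only [Phi_eq_gaussianReal_Iic]

lemma inv_diagonal_of_ne_zero {n α : Type*} [Fintype n] [DecidableEq n] [Field α] {s : n → α}
    (hs : ∀ j, s j ≠ 0) : (Matrix.diagonal s)⁻¹ = Matrix.diagonal fun j => (s j)⁻¹ := by
  refine Matrix.inv_eq_right_inv ?_
  rw [Matrix.diagonal_mul_diagonal, ← Matrix.diagonal_one]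
  exact congrArg Matrix.diagonal (funext fun j => mul_inv_cancel₀ (hs j))

theorem probit_posterior_unified_skew_normal_general (K J : ℕ) (ξ : Fin K → ℝ)
    (Ω : Matrix (Fin K) (Fin K) ℝ) (hΩ : Ω.PosDef)
    (B : Matrix (Fin J) (Fin K) ℝ) (d : Fin J → ℝ) (y : Fin J → ℝ)
    (D₁ : Matrix (Fin J) (Fin K) ℝ) (hD₁ : D₁ = Matrix.diagonal (fun j => 2 * y j - 1) * B)
    (D₂ : Fin J → ℝ) (hD₂ : D₂ = fun j => (2 * y j - 1) * d j)
    (S : Matrix (Fin J) (Fin J) ℝ)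
    (hS : S = Matrix.diagonal fun j => Real.sqrt ((D₁ j) ⬝ᵥ (Ω *ᵥ (D₁ j)) + 1))
    (hpsd : (S⁻¹ * S⁻¹).PosSemidef) :
    ∃ c > 0, ∀ θ : Fin K → ℝ,
      mvGaussDensity Ω (θ - ξ) * (∏ j, Phi ((2 * y j - 1) * ((B *ᵥ θ) j + d j))) =
        c * (mvGaussDensity Ω (θ - ξ) *
          gaussCDF (S⁻¹ * S⁻¹) hpsd
            (S⁻¹ *ᵥ (D₁ *ᵥ ξ + D₂) + S⁻¹ *ᵥ (D₁ *ᵥ (θ - ξ)))) := by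
  set s : Fin J → ℝ := fun j => Real.sqrt ((D₁ j) ⬝ᵥ (Ω *ᵥ (D₁ j)) + 1)
  have hs : ∀ j, 0 < s j := fun j => Real.sqrt_pos.mpr <| by
    have := hΩ.posSemidef.dotProduct_mulVec_nonneg (D₁ j)
    simp only [star_trivial] at this
    linarith
  have hSinv : S⁻¹ = Matrix.diagonal fun j => (s j)⁻¹ :=
    hS ▸ inv_diagonal_of_ne_zero fun j => (hs j).ne'
  refine ⟨1, one_pos, fun θ => ?_⟩
  rw [← Matrix.mulVec_add, one_mul, gaussCDF_diagonal_mulVec (fun j => inv_pos.mpr (hs j)) hSinv]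
  congr 1
  refine Finset.prod_congr rfl fun j _ => congrArg Phi ?_
  simp only [hD₁, hD₂, ← Matrix.mulVec_mulVec, Matrix.mulVec_sub, Pi.add_apply, Pi.sub_apply,
    Matrix.mulVec_diagonal]
  ring

/-- With a N(ξ, Ω) prior on θ and probit likelihood ∏ⱼ Φ((2yⱼ−1)(Bⱼ'θ + dⱼ)), the posterior
density of θ is proportional to
φ_K(θ−ξ; Ω) · Φ_J(S⁻¹(D₁ξ + D₂) + S⁻¹D₁(θ−ξ); S⁻¹S⁻¹). -/
theorem probit_posterior_unified_skew_normal (K J : ℕ) (ξ : Fin K → ℝ)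
    (Ω : Matrix (Fin K) (Fin K) ℝ) (hΩ : Ω.PosDef)
    (B : Matrix (Fin J) (Fin K) ℝ) (d : Fin J → ℝ) (y : Fin J → ℝ)
    (hy : ∀ j, y j = 0 ∨ y j = 1)
    (D₁ : Matrix (Fin J) (Fin K) ℝ) (hD₁ : D₁ = Matrix.diagonal (fun j => 2 * y j - 1) * B)
    (D₂ : Fin J → ℝ) (hD₂ : D₂ = fun j => (2 * y j - 1) * d j)
    (S : Matrix (Fin J) (Fin J) ℝ)
    (hS : S = Matrix.diagonal fun j => Real.sqrt ((D₁ j) ⬝ᵥ (Ω *ᵥ (D₁ j)) + 1))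
    (hpsd : (S⁻¹ * S⁻¹).PosSemidef) :
    ∃ c > 0, ∀ θ : Fin K → ℝ,
      mvGaussDensity Ω (θ - ξ) * (∏ j, Phi ((2 * y j - 1) * ((B *ᵥ θ) j + d j))) =
        c * (mvGaussDensity Ω (θ - ξ) *
          gaussCDF (S⁻¹ * S⁻¹) hpsd
            (S⁻¹ *ᵥ (D₁ *ᵥ ξ + D₂) + S⁻¹ *ᵥ (D₁ *ᵥ (θ - ξ)))) :=
  probit_posterior_unified_skew_normal_general K J ξ Ω hΩ B d y D₁ hD₁ D₂ hD₂ S hS hpsd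
end
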